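/- Let n be an integer. Define g_n(Θ,φ) := exp((nφ/2)·k)·exp(−(Θ/2)·j)·exp(−(nφ/2)·k), q_n(Θ,φ) := sin Θ cos(nφ)·i + sin Θ sin(nφ)·j + cos Θ·k, and Ã_φ(Θ,φ) := (n/2)cos Θ·q_n(Θ,φ) − (n/2)·k. Then for all real Θ, φ: g_n(Θ,φ) · Ã_φ(Θ,φ) · g_n(Θ,φ)⁻¹ + g_n(Θ,φ) · ∂_φ( g_n(Θ,φ)⁻¹ ) = (n/2)(−1 + cos Θ)·k. (The dφ-component of the Charap–Duff connection is transformed by g_n into the Dirac-monopole-type Abelian potential A⁺_φ = (n/2)(−1 + cos Θ)·k.) -/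

import Mathlib

open scoped Quaternion

/-- The imaginary unit `i` of the real quaternions. -/
def qi : ℍ[ℝ] := ⟨0, 1, 0, 0⟩

/-- The imaginary unit `j` of the real quaternions. -/
def qj : ℍ[ℝ] := ⟨0, 0, 1, 0⟩

/-- The imaginary unit `k` of the real quaternions. -/
def qk : ℍ[ℝ] := ⟨0, 0, 0, 1⟩

/-- The gauge transformation `g_n(Θ,φ) = exp((nφ/2)k)·exp(−(Θ/2)j)·exp(−(nφ/2)k)`. -/
noncomputable def gaugeG (n : ℤ) (Θ φ : ℝ) : ℍ[ℝ] :=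
  NormedSpace.exp ((n * φ / 2 : ℝ) • qk) * NormedSpace.exp ((-(Θ / 2) : ℝ) • qj) *
    NormedSpace.exp ((-(n * φ / 2) : ℝ) • qk)

/-- The Charap–Duff field `q_n(Θ,φ) = sin Θ cos(nφ)·i + sin Θ sin(nφ)·j + cos Θ·k`. -/
noncomputable def charapDuffQ (n : ℤ) (Θ φ : ℝ) : ℍ[ℝ] :=
  (Real.sin Θ * Real.cos (n * φ)) • qi + (Real.sin Θ * Real.sin (n * φ)) • qj
    + Real.cos Θ • qk

/-- The `dφ`-component `Ã_φ = (n/2)cos Θ·q_n − (n/2)·k` of the Charap–Duff connection. -/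
noncomputable def Aphi (n : ℤ) (Θ φ : ℝ) : ℍ[ℝ] :=
  ((n : ℝ) / 2 * Real.cos Θ) • charapDuffQ n Θ φ - ((n : ℝ) / 2) • qk

/-! Write `g_n = R h R⁻¹` with `R = exp((nφ/2)k)` and `h = exp(−(Θ/2)j)`. Conjugation by `R⁻¹`
rotates `q_n(Θ,φ)` about `k` back to `q_n(Θ,0) = sin Θ i + cos Θ k`, and `h` rotates that onto `k`,
so `g_n q_n g_n⁻¹ = k`. Only `R` depends on `φ`, and it commutes with `k`, so
`g_n ∂_φ(g_n⁻¹) = (n/2)(g_n k g_n⁻¹ − k)`. Since `Ã_φ = (n/2) cos Θ q_n − (n/2) k`, the terms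
`g_n k g_n⁻¹` cancel and what is left is `(n/2) cos Θ k − (n/2) k`. -/

open NormedSpace

theorem hasDerivAt_exp_smul_mul_mul_exp_neg_smul {𝕂 𝔸 : Type*} [RCLike 𝕂] [NormedRing 𝔸]
    [NormedAlgebra 𝕂 𝔸] [CompleteSpace 𝔸] (x a : 𝔸) (t : 𝕂) :
    HasDerivAt (fun s : 𝕂 => exp (s • x) * a * exp ((-s) • x))
      (x * (exp (t • x) * a * exp ((-t) • x)) - exp (t • x) * a * exp ((-t) • x) * x) t := by
  have hneg : HasDerivAt (fun s : 𝕂 => exp ((-s) • x)) ((-1 : 𝕂) • (exp ((-t) • x) * x)) t :=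
    (hasDerivAt_exp_smul_const x (-t)).scomp t (hasDerivAt_neg t)
  convert ((hasDerivAt_exp_smul_const' x t).mul_const a).fun_mul hneg using 1
  rw [neg_one_smul]
  noncomm_ring

namespace Quaternion

theorem exp_smul_of_re_eq_zero_of_norm_eq_one {q : ℍ[ℝ]} (hre : q.re = 0) (hnorm : ‖q‖ = 1)
    (t : ℝ) : exp (t • q) = ↑(Real.cos t) + Real.sin t • q := by
  rw [exp_of_re_eq_zero _ (by simp [hre]), norm_smul, hnorm, mul_one, Real.norm_eq_abs,
    Real.cos_abs, smul_smul]
  congr 2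
  rcases eq_or_ne t 0 with rfl | ht
  · simp
  rcases abs_choice t with h | h
  · rw [h]
    field_simp
  · rw [h, Real.sin_neg]
    field_simp

/- `NormedSpace.exp_neg` and `NormedSpace.isUnit_exp` need a `NormedAlgebra ℚ ℍ[ℝ]` instance,
which Mathlib does not provide; the real exponential series converges everywhere instead. -/
theorem mem_eball_expSeries_radius (x : ℍ[ℝ]) :
    x ∈ Metric.eball 0 (expSeries ℝ ℍ[ℝ]).radius :=
  (expSeries_radius_eq_top ℝ ℍ[ℝ]).symm ▸ edist_lt_top _ _

theorem exp_neg (x : ℍ[ℝ]) : exp (-x) = (exp x)⁻¹ :=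
  exp_neg_of_mem_ball ℝ (mem_eball_expSeries_radius x)

theorem exp_ne_zero (x : ℍ[ℝ]) : exp x ≠ 0 :=
  (isUnit_exp_of_mem_ball (𝕂 := ℝ) (mem_eball_expSeries_radius x)).ne_zero

end Quaternion

@[simp] lemma qi_re : qi.re = 0 := rfl
@[simp] lemma qi_imI : qi.imI = 1 := rfl
@[simp] lemma qi_imJ : qi.imJ = 0 := rfl
@[simp] lemma qi_imK : qi.imK = 0 := rfl
@[simp] lemma qj_re : qj.re = 0 := rfl
@[simp] lemma qj_imI : qj.imI = 0 := rfl
@[simp] lemma qj_imJ : qj.imJ = 1 := rfl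
@[simp] lemma qj_imK : qj.imK = 0 := rfl
@[simp] lemma qk_re : qk.re = 0 := rfl
@[simp] lemma qk_imI : qk.imI = 0 := rfl
@[simp] lemma qk_imJ : qk.imJ = 0 := rfl
@[simp] lemma qk_imK : qk.imK = 1 := rfl

lemma norm_qj : ‖qj‖ = 1 := by
  rw [← pow_eq_one_iff_of_nonneg (norm_nonneg _) two_ne_zero, sq,
    ← Quaternion.normSq_eq_norm_mul_self, Quaternion.normSq_def']
  simp

lemma norm_qk : ‖qk‖ = 1 := by
  rw [← pow_eq_one_iff_of_nonneg (norm_nonneg _) two_ne_zero, sq,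
    ← Quaternion.normSq_eq_norm_mul_self, Quaternion.normSq_def']
  simp

lemma exp_smul_qj (t : ℝ) : exp (t • qj) = ↑(Real.cos t) + Real.sin t • qj :=
  Quaternion.exp_smul_of_re_eq_zero_of_norm_eq_one rfl norm_qj t

lemma exp_smul_qk (t : ℝ) : exp (t • qk) = ↑(Real.cos t) + Real.sin t • qk :=
  Quaternion.exp_smul_of_re_eq_zero_of_norm_eq_one rfl norm_qk t

lemma exp_smul_qk_mul_charapDuffQ (n : ℤ) (Θ φ : ℝ) :
    exp ((-(n * φ / 2) : ℝ) • qk) * charapDuffQ n Θ φ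
      = charapDuffQ n Θ 0 * exp ((-(n * φ / 2) : ℝ) • qk) := by
  have hcos := Real.cos_sub (n * φ) (n * φ / 2)
  have hsin := Real.sin_sub (n * φ) (n * φ / 2)
  rw [sub_half] at hcos hsin
  rw [exp_smul_qk, charapDuffQ, charapDuffQ]
  ext <;> simp
  · ring
  · linear_combination -Real.sin Θ * hcos
  · linear_combination -Real.sin Θ * hsin
  · ring

lemma exp_smul_qj_mul_charapDuffQ_zero (n : ℤ) (Θ : ℝ) :
    exp ((-(Θ / 2) : ℝ) • qj) * charapDuffQ n Θ 0 = qk * exp ((-(Θ / 2) : ℝ) • qj) := by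
  have hcos := Real.cos_sub Θ (Θ / 2)
  have hsin := Real.sin_sub Θ (Θ / 2)
  rw [sub_half] at hcos hsin
  rw [exp_smul_qj, charapDuffQ]
  ext <;> simp
  · linear_combination -hsin
  · linear_combination -hcos

lemma gaugeG_ne_zero (n : ℤ) (Θ φ : ℝ) : gaugeG n Θ φ ≠ 0 := by
  simp only [gaugeG, ne_eq, mul_eq_zero, Quaternion.exp_ne_zero, or_self, not_false_eq_true]

lemma inv_gaugeG (n : ℤ) (Θ φ : ℝ) :
    (gaugeG n Θ φ)⁻¹ = exp ((n * φ / 2 : ℝ) • qk) * exp ((Θ / 2 : ℝ) • qj) *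
      exp ((-(n * φ / 2) : ℝ) • qk) := by
  simp only [gaugeG, mul_inv_rev, neg_smul, Quaternion.exp_neg, inv_inv, mul_assoc]

lemma gaugeG_mul_charapDuffQ (n : ℤ) (Θ φ : ℝ) :
    gaugeG n Θ φ * charapDuffQ n Θ φ = qk * gaugeG n Θ φ := by
  have hcomm : Commute qk (exp ((n * φ / 2 : ℝ) • qk)) :=
    ((Commute.refl qk).smul_right _).exp_right
  rw [gaugeG, mul_assoc, exp_smul_qk_mul_charapDuffQ, ← mul_assoc, mul_assoc (exp _),
    exp_smul_qj_mul_charapDuffQ_zero, ← mul_assoc, ← hcomm.eq]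
  simp only [mul_assoc]

lemma gaugeG_mul_charapDuffQ_mul_inv (n : ℤ) (Θ φ : ℝ) :
    gaugeG n Θ φ * charapDuffQ n Θ φ * (gaugeG n Θ φ)⁻¹ = qk := by
  rw [gaugeG_mul_charapDuffQ, mul_assoc, mul_inv_cancel₀ (gaugeG_ne_zero n Θ φ), mul_one]

lemma hasDerivAt_inv_gaugeG (n : ℤ) (Θ φ : ℝ) :
    HasDerivAt (fun t : ℝ => (gaugeG n Θ t)⁻¹)
      (((n : ℝ) / 2) • (qk * (gaugeG n Θ φ)⁻¹ - (gaugeG n Θ φ)⁻¹ * qk)) φ := by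
  have hα : HasDerivAt (fun t : ℝ => (n * t / 2 : ℝ)) ((n : ℝ) / 2) φ := by
    simpa using ((hasDerivAt_id φ).const_mul (n : ℝ)).div_const 2
  simp only [inv_gaugeG]
  exact (hasDerivAt_exp_smul_mul_mul_exp_neg_smul qk (exp ((Θ / 2 : ℝ) • qj)) _).scomp φ hα

lemma gaugeG_mul_deriv_inv_gaugeG (n : ℤ) (Θ φ : ℝ) :
    gaugeG n Θ φ * deriv (fun t : ℝ => (gaugeG n Θ t)⁻¹) φ
      = ((n : ℝ) / 2) • (gaugeG n Θ φ * qk * (gaugeG n Θ φ)⁻¹ - qk) := by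
  rw [(hasDerivAt_inv_gaugeG n Θ φ).deriv, mul_smul_comm, mul_sub, ← mul_assoc, ← mul_assoc,
    mul_inv_cancel₀ (gaugeG_ne_zero n Θ φ), one_mul]

/-- The `dφ`-component of the Charap–Duff connection is transformed by `g_n` into the
Dirac-monopole-type Abelian potential:
`g_n·Ã_φ·g_n⁻¹ + g_n·∂_φ(g_n⁻¹) = (n/2)(−1 + cos Θ)·k`. -/
theorem gauge_transforms_phi_component (n : ℤ) (Θ φ : ℝ) :
    gaugeG n Θ φ * Aphi n Θ φ * (gaugeG n Θ φ)⁻¹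
      + gaugeG n Θ φ * deriv (fun t : ℝ => (gaugeG n Θ t)⁻¹) φ
    = ((n : ℝ) / 2 * (-1 + Real.cos Θ)) • qk := by
  rw [gaugeG_mul_deriv_inv_gaugeG, Aphi]
  simp only [mul_sub, sub_mul, mul_smul_comm, smul_mul_assoc, gaugeG_mul_charapDuffQ_mul_inv]
  module
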